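/- For the serializability shard-local functions, the commutativity property holds: for all payloads l and l', if g_s({l}, l') = COMMIT then f_s({l'}, l) = COMMIT. -/
import Mathlib


inductive Decision | commit | abort
deriving DecidableEq

def dmeet : Decision → Decision → Decision
  | .commit, .commit => .commit
  | _, _ => .abort

structure Payload (Obj Ver Val : Type) where
  R : Set (Obj × Ver)
  W : Set (Obj × Val)
  Vc : Ver

def serOKs {Obj Ver Val : Type} [LinearOrder Ver] (Objs : Set Obj)
    (L : Set (Payload Obj Ver Val)) (l : Payload Obj Ver Val) : Prop :=
  ∀ x ∈ Objs, ∀ v, (x, v) ∈ l.R → ∀ p ∈ L, (∃ u, (x, u) ∈ p.W) → p.Vc ≤ v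

def pendOKs {Obj Ver Val : Type} (Objs : Set Obj)
    (L : Set (Payload Obj Ver Val)) (l : Payload Obj Ver Val) : Prop :=
  ∀ x ∈ Objs,
    ((∃ v, (x, v) ∈ l.R) → ∀ p ∈ L, ¬ ∃ u, (x, u) ∈ p.W) ∧
    ((∃ u, (x, u) ∈ l.W) → ∀ p ∈ L, ¬ ∃ v, (x, v) ∈ p.R)

open Classical in
noncomputable def fS {Obj Ver Val : Type} [LinearOrder Ver] (Objs : Set Obj)
    (L : Set (Payload Obj Ver Val)) (l : Payload Obj Ver Val) : Decision :=
  if serOKs Objs L l then Decision.commit else Decision.abort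

open Classical in
noncomputable def gS {Obj Ver Val : Type} (Objs : Set Obj)
    (L : Set (Payload Obj Ver Val)) (l : Payload Obj Ver Val) : Decision :=
  if pendOKs Objs L l then Decision.commit else Decision.abort

theorem gS_fS_commutativity {Obj Ver Val : Type} [LinearOrder Ver] (Objs : Set Obj)
    (l l' : Payload Obj Ver Val) :
    gS Objs {l} l' = Decision.commit → fS Objs {l'} l = Decision.commit := by
  intro h
  simp only [gS, fS] at *
  split at h
  · next hp =>
    rw [if_pos]
    intro x hx v hr p hp' ⟨u, hw⟩
    rcases hp' with rfl
    exact absurd ⟨v, hr⟩ (((hp x hx).2 ⟨u, hw⟩) l rfl)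
  · exact absurd h (by simp)
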